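/- arXiv:2112.08503 — 2 statements merged into one kernel-verified Lean document; each statement's English description precedes it below -/
import Mathlib

section
/- If G is a PCG, then any graph obtained from G by adding a new vertex of degree 1 (adjacent to a single existing vertex) is also a PCG. -/
/-!
Stretch every leaf edge of a realizing tree by `S`: distances between distinct leaves grow by
`2 S` and the interval `[a, b]` is shifted along, but now distinct leaves are more than `b - a`
apart. Give the leaf of `x` a twin at distance `0`, which takes over the role of `x`, and hang
the new vertex from the old leaf of `x` by an edge of weight `a`. It is then at distance exactly
`a` from `x` and at distance more than `b` from every other leaf. An empty interval is first
replaced by a point beyond all leaf distances.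
-/

open SimpleGraph

/-- An edge-weighted tree: a connected acyclic simple graph together with a
symmetric nonnegative real weight function on (pairs of) vertices. -/
structure WTree (W : Type) where
  g : SimpleGraph W
  conn : g.Connected
  acyclic : g.IsAcyclic
  wt : W → W → ℝ
  wt_symm : ∀ u v, wt u v = wt v u
  wt_nonneg : ∀ u v, 0 ≤ wt u v

namespace WTree

variable {W : Type}

/-- The total weight of a walk in a weighted tree. -/
def walkWeight (T : WTree W) : {u v : W} → T.g.Walk u v → ℝ
  | _, _, .nil => 0
  | _, _, .cons (u := a) (v := b) _ p => T.wt a b + T.walkWeight p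

/-- The weighted distance between two vertices of a weighted tree:
the total weight of the unique path joining them. -/
noncomputable def dist (T : WTree W) (u v : W) : ℝ :=
  letI := Classical.decEq W
  T.walkWeight (((T.conn.preconnected u v).some.toPath : T.g.Path u v) : T.g.Walk u v)

/-- A leaf of a tree: a vertex with exactly one neighbor. -/
def IsLeaf (T : WTree W) (v : W) : Prop := ∃! u, T.g.Adj v u

end WTree
/-- `G` is realized as a pairwise compatibility graph by the weighted tree `T`,
the set `I` of real numbers, and the map `f` identifying the vertices of `G`
with the leaves of `T`. -/
def IsPCGOn {V W : Type} (G : SimpleGraph V) (T : WTree W) (I : Set ℝ) (f : V → W) : Prop :=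
  Function.Injective f ∧ (∀ v, T.IsLeaf (f v)) ∧ (∀ w, T.IsLeaf w → ∃ v, f v = w) ∧
    ∀ u v, u ≠ v → (G.Adj u v ↔ T.dist (f u) (f v) ∈ I)

/-- A graph is a PCG if it is realized by some finite weighted tree together with
an interval `[a, b]` of nonnegative reals. -/
def IsPCG {V : Type} (G : SimpleGraph V) : Prop :=
  ∃ (W : Type) (_ : Fintype W) (T : WTree W) (a b : ℝ) (f : V → W),
    0 ≤ a ∧ IsPCGOn G T (Set.Icc a b) f

/-- A graph is a `k`-interval-PCG if it is realized by a finite weighted tree together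
with `k` pairwise disjoint intervals of nonnegative reals, an edge being present iff
the corresponding leaf distance lies in one of the intervals. -/
def IsKIntervalPCG {V : Type} (k : ℕ) (G : SimpleGraph V) : Prop :=
  ∃ (W : Type) (_ : Fintype W) (T : WTree W) (I : Fin k → Set ℝ) (f : V → W),
    (∀ i, ∃ a b : ℝ, 0 ≤ a ∧ I i = Set.Icc a b) ∧
    Pairwise (Function.onFun Disjoint I) ∧
    Function.Injective f ∧ (∀ v, T.IsLeaf (f v)) ∧ (∀ w, T.IsLeaf w → ∃ v, f v = w) ∧
    ∀ u v, u ≠ v → (G.Adj u v ↔ ∃ i, T.dist (f u) (f v) ∈ I i)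

/-- A graph is a `k`-OR-PCG if its edge set is the union of the edge sets of `k` PCGs
on the same vertex set. -/
def IsORPCG {V : Type} (k : ℕ) (G : SimpleGraph V) : Prop :=
  ∃ Gs : Fin k → SimpleGraph V, (∀ i, IsPCG (Gs i)) ∧ G = ⨆ i, Gs i

/-- A graph is a `k`-AND-PCG if its edge set is the intersection of the edge sets of
`k` PCGs on the same vertex set. -/
def IsANDPCG {V : Type} (k : ℕ) (G : SimpleGraph V) : Prop :=
  ∃ Gs : Fin k → SimpleGraph V, (∀ i, IsPCG (Gs i)) ∧ G = ⨅ i, Gs i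

namespace SimpleGraph

variable {V V' : Type*} {G : SimpleGraph V}

lemma IsAcyclic.map (f : V ↪ V') (h : G.IsAcyclic) : (G.map f).IsAcyclic := by
  intro a c hc
  have hrange : ∀ y ∈ c.support, y ∈ Set.range f := by
    intro y hy
    obtain ⟨e, he, hye⟩ := (c.mem_support_iff_exists_mem_edges_of_not_nil hc.not_nil).1 hy
    obtain ⟨e', -, rfl⟩ := edgeSet_map f G ▸ c.edges_subset_edgeSet he
    induction e' using Sym2.ind with
    | _ u v =>
      rw [Function.Embedding.sym2Map_apply, Sym2.map_mk, Sym2.mem_iff] at hye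
      rcases hye with rfl | rfl <;> exact ⟨_, rfl⟩
  have hcycle : (c.induce _ hrange).IsCycle := by
    have hι : Function.Injective (Embedding.induce (G := G.map f) (Set.range f)).toHom :=
      Subtype.val_injective
    rwa [← Walk.isCycle_map_iff_of_injective hι, Walk.map_induce]
  exact h.embedding (Embedding.map f G).isoInduceRange.symm.toEmbedding _ hcycle

variable (G) in
def addPendant (x : V) : SimpleGraph (Option V) :=
  G.map Function.Embedding.some ⊔ edge none (some x)

variable {x : V}

@[simp] lemma addPendant_adj_some_some {u v : V} :
    (G.addPendant x).Adj (some u) (some v) ↔ G.Adj u v := by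
  simp only [addPendant, sup_adj, map_adj, edge_adj]
  simp

@[simp] lemma addPendant_adj_none_some {v : V} :
    (G.addPendant x).Adj none (some v) ↔ v = x := by
  simp only [addPendant, sup_adj, map_adj, edge_adj]
  simp [eq_comm]

@[simp] lemma addPendant_adj_some_none {v : V} :
    (G.addPendant x).Adj (some v) none ↔ v = x := by
  rw [adj_comm, addPendant_adj_none_some]

lemma fromRel_eq_addPendant :
    fromRel (fun a b : Option V => (∃ u v : V, a = some u ∧ b = some v ∧ G.Adj u v) ∨
      (a = none ∧ b = some x)) = G.addPendant x := by
  ext (_ | u) (_ | v)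
  · simp
  · simp [eq_comm]
  · simp [eq_comm]
  · simpa [G.adj_comm] using fun h : G.Adj u v => h.ne

variable (G x) in
def addPendantEmbedding : G ↪g G.addPendant x where
  toEmbedding := .some
  map_rel_iff' := addPendant_adj_some_some

@[simp] lemma addPendantEmbedding_apply (v : V) : G.addPendantEmbedding x v = some v := rfl

lemma Connected.addPendant (h : G.Connected) : (G.addPendant x).Connected := by
  refine (connected_iff_exists_forall_reachable _).2 ⟨some x, ?_⟩
  rintro (_ | v)
  · exact (addPendant_adj_some_none.2 rfl).reachable
  · exact (h.preconnected x v).map (addPendantEmbedding G x).toHom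

lemma IsAcyclic.addPendant (h : G.IsAcyclic) : (G.addPendant x).IsAcyclic := by
  refine (h.map _).sup_edge_of_not_reachable (not_reachable_of_neighborSet_left_eq_empty
    (Option.some_ne_none x).symm ?_)
  ext (_ | v) <;> simp [map_adj']

end SimpleGraph

namespace WTree

variable {W : Type} (T : WTree W)

lemma walkWeight_nonneg {u v : W} (p : T.g.Walk u v) : 0 ≤ T.walkWeight p := by
  induction p with
  | nil => exact le_rfl
  | cons _ _ ih => exact add_nonneg (T.wt_nonneg _ _) ih

lemma walkWeight_append {u v w : W} (p : T.g.Walk u v) (q : T.g.Walk v w) :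
    T.walkWeight (p.append q) = T.walkWeight p + T.walkWeight q := by
  induction p with
  | nil => simp [walkWeight]
  | cons _ p ih => simp only [Walk.cons_append, walkWeight, ih]; ring

lemma walkWeight_reverse {u v : W} (p : T.g.Walk u v) :
    T.walkWeight p.reverse = T.walkWeight p := by
  induction p with
  | nil => rfl
  | cons _ p ih =>
    rw [Walk.reverse_cons, walkWeight_append, ih]
    simp only [walkWeight, T.wt_symm]
    ring

lemma dist_eq_walkWeight {u v : W} (p : T.g.Walk u v) (hp : p.IsPath) :
    T.dist u v = T.walkWeight p := by
  let _ := Classical.decEq W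
  unfold dist
  rw [(T.acyclic.subsingleton_path u v).elim (T.conn.preconnected u v).some.toPath ⟨p, hp⟩]

lemma dist_nonneg (u v : W) : 0 ≤ T.dist u v := by
  obtain ⟨p, hp⟩ := T.conn.exists_isPath u v
  exact T.dist_eq_walkWeight p hp ▸ T.walkWeight_nonneg p

@[simp] lemma dist_self (u : W) : T.dist u u = 0 :=
  T.dist_eq_walkWeight .nil .nil

lemma dist_comm (u v : W) : T.dist u v = T.dist v u := by
  obtain ⟨p, hp⟩ := T.conn.exists_isPath v u
  rw [T.dist_eq_walkWeight p hp, ← T.walkWeight_reverse, T.dist_eq_walkWeight _ hp.reverse]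

lemma not_isLeaf_of_adj_of_adj {w u u' : W} (hu : T.g.Adj w u) (hu' : T.g.Adj w u')
    (hne : u ≠ u') : ¬ T.IsLeaf w :=
  fun ⟨_, _, h⟩ => hne ((h u hu).trans (h u' hu').symm)

section LengthenLeafEdges

variable {S : ℝ}

noncomputable def leafBonus (S : ℝ) : W → ℝ :=
  {w | T.IsLeaf w}.indicator fun _ => S

variable {T} in
lemma leafBonus_of_isLeaf {w : W} (hw : T.IsLeaf w) : T.leafBonus S w = S :=
  Set.indicator_of_mem (s := {w | T.IsLeaf w}) hw _

variable {T} in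
lemma leafBonus_of_not_isLeaf {w : W} (hw : ¬ T.IsLeaf w) : T.leafBonus S w = 0 :=
  Set.indicator_of_notMem (s := {w | T.IsLeaf w}) hw _

lemma leafBonus_nonneg (hS : 0 ≤ S) (w : W) : 0 ≤ T.leafBonus S w :=
  Set.indicator_nonneg (fun _ _ => hS) w

noncomputable def lengthenLeafEdges (hS : 0 ≤ S) : WTree W where
  g := T.g
  conn := T.conn
  acyclic := T.acyclic
  wt u v := T.wt u v + T.leafBonus S u + T.leafBonus S v
  wt_symm u v := by rw [T.wt_symm]; ring
  wt_nonneg u v := by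
    linarith [T.wt_nonneg u v, T.leafBonus_nonneg hS u, T.leafBonus_nonneg hS v]

variable (hS : 0 ≤ S)

/-- Interior vertices of a path are not leaves, so only its two end edges gain weight. -/
lemma walkWeight_lengthenLeafEdges {u v : W} (p : T.g.Walk u v) (hp : p.IsPath) (huv : u ≠ v) :
    (T.lengthenLeafEdges hS).walkWeight p = T.walkWeight p + T.leafBonus S u + T.leafBonus S v := by
  induction p with
  | nil => exact absurd rfl huv
  | @cons u w v huw q ih =>
    cases q with
    | nil => change T.wt u w + _ + _ + 0 = T.wt u w + 0 + _ + _; ring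
    | @cons w t v hwt r =>
      have hq := hp.of_cons
      have hut : u ≠ t := by
        rintro rfl
        exact ((Walk.cons_isPath_iff _ _).1 hp).2 (by simp)
      have hwv : w ≠ v := by
        rintro rfl
        exact ((Walk.cons_isPath_iff _ _).1 hq).2 r.end_mem_support
      have hw := leafBonus_of_not_isLeaf (S := S) (T.not_isLeaf_of_adj_of_adj huw.symm hwt hut)
      change T.wt u w + _ + _ + (T.lengthenLeafEdges hS).walkWeight (.cons hwt r) =
        T.wt u w + T.walkWeight (.cons hwt r) + _ + _
      erw [ih hq hwv]
      rw [hw]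
      ring

lemma dist_lengthenLeafEdges {u v : W} (hu : T.IsLeaf u) (hv : T.IsLeaf v) (huv : u ≠ v) :
    (T.lengthenLeafEdges hS).dist u v = T.dist u v + 2 * S := by
  obtain ⟨p, hp⟩ := T.conn.exists_isPath u v
  rw [(T.lengthenLeafEdges hS).dist_eq_walkWeight p hp, T.dist_eq_walkWeight p hp,
    walkWeight_lengthenLeafEdges T hS p hp huv, leafBonus_of_isLeaf hu, leafBonus_of_isLeaf hv]
  ring

end LengthenLeafEdges

section AddPendant

variable (c : W) {w₀ : ℝ} (hw₀ : 0 ≤ w₀)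

/-- The weight `w₀` at the non-edge `(none, none)` plays no role. -/
def addPendant : WTree (Option W) where
  g := T.g.addPendant c
  conn := T.conn.addPendant
  acyclic := T.acyclic.addPendant
  wt
    | some u, some v => T.wt u v
    | _, _ => w₀
  wt_symm := by rintro (_ | u) (_ | v) <;> simp [T.wt_symm]
  wt_nonneg := by rintro (_ | u) (_ | v) <;> simp [T.wt_nonneg, hw₀]

lemma walkWeight_addPendant_map {u v : W} (p : T.g.Walk u v) :
    (T.addPendant c hw₀).walkWeight (p.map (T.g.addPendantEmbedding c).toHom) = T.walkWeight p := by
  induction p with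
  | nil => rfl
  | cons _ p ih => exact congrArg (T.wt _ _ + ·) ih

lemma dist_addPendant_some_some (u v : W) :
    (T.addPendant c hw₀).dist (some u) (some v) = T.dist u v := by
  obtain ⟨p, hp⟩ := T.conn.exists_isPath u v
  rw [T.dist_eq_walkWeight p hp, ← T.walkWeight_addPendant_map c hw₀]
  exact dist_eq_walkWeight _ _ (hp.map (T.g.addPendantEmbedding c).injective)

lemma dist_addPendant_none_some (u : W) :
    (T.addPendant c hw₀).dist none (some u) = w₀ + T.dist c u := by
  obtain ⟨p, hp⟩ := T.conn.exists_isPath c u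
  have hadj : (T.g.addPendant c).Adj none ((T.g.addPendantEmbedding c).toHom c) :=
    addPendant_adj_none_some.2 rfl
  have hpath : (Walk.cons hadj (p.map (T.g.addPendantEmbedding c).toHom)).IsPath := by
    refine (Walk.cons_isPath_iff _ _).2 ⟨hp.map (T.g.addPendantEmbedding c).injective, ?_⟩
    rw [Walk.support_map]
    simp
  rw [dist_eq_walkWeight _ _ hpath, T.dist_eq_walkWeight p hp,
    ← T.walkWeight_addPendant_map c hw₀]
  rfl

lemma isLeaf_addPendant_none : (T.addPendant c hw₀).IsLeaf none :=
  ⟨some c, addPendant_adj_none_some.2 rfl, fun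
    | none, h => absurd h (SimpleGraph.irrefl _)
    | some _, h => congrArg some (addPendant_adj_none_some.1 h)⟩

variable {c} in
lemma isLeaf_addPendant_some_iff {w : W} (hw : w ≠ c) :
    (T.addPendant c hw₀).IsLeaf (some w) ↔ T.IsLeaf w := by
  refine ⟨fun ⟨y, hy, huniq⟩ => ?_, fun ⟨y, hy, huniq⟩ => ?_⟩
  · cases y with
    | none => exact absurd (addPendant_adj_some_none.1 hy) hw
    | some y => exact ⟨y, addPendant_adj_some_some.1 hy,
        fun z hz => Option.some_injective _ (huniq (some z) (addPendant_adj_some_some.2 hz))⟩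
  · refine ⟨some y, addPendant_adj_some_some.2 hy, fun
      | none, h => absurd (addPendant_adj_some_none.1 h) hw
      | some z, h => congrArg some (huniq z (addPendant_adj_some_some.1 h))⟩

variable {c} in
lemma not_isLeaf_addPendant_some_self {d : W} (hd : T.g.Adj c d) :
    ¬ (T.addPendant c hw₀).IsLeaf (some c) :=
  not_isLeaf_of_adj_of_adj _ (addPendant_adj_some_none.2 rfl) (addPendant_adj_some_some.2 hd)
    (Option.some_ne_none d).symm

end AddPendant

end WTree

namespace IsPCGOn

variable {V W : Type} {G : SimpleGraph V} {T : WTree W} {f : V → W} {a b : ℝ}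

/-- An empty interval realizes only the edgeless graph, which any single point beyond all leaf
distances realizes as well. -/
lemma exists_nonempty_Icc [Finite W] (h : IsPCGOn G T (Set.Icc a b) f) (ha : 0 ≤ a) :
    ∃ a' b', 0 ≤ a' ∧ a' ≤ b' ∧ IsPCGOn G T (Set.Icc a' b') f := by
  by_cases hab : a ≤ b
  · exact ⟨a, b, ha, hab, h⟩
  obtain ⟨M, hM⟩ := (Set.finite_range fun p : W × W => T.dist p.1 p.2).bddAbove
  obtain ⟨hinj, hleaf, hsurj, hadj⟩ := h
  refine ⟨max M 0 + 1, max M 0 + 1, by positivity, le_rfl, hinj, hleaf, hsurj, fun u v huv => ?_⟩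
  have hle : T.dist (f u) (f v) ≤ M := hM ⟨(f u, f v), rfl⟩
  rw [hadj u v huv, Set.Icc_eq_empty hab, Set.Icc_self]
  simp only [Set.mem_empty_iff_false, Set.mem_singleton_iff, false_iff]
  intro heq
  linarith [le_max_left M 0]

lemma lengthenLeafEdges (h : IsPCGOn G T (Set.Icc a b) f) {S : ℝ} (hS : 0 ≤ S) :
    IsPCGOn G (T.lengthenLeafEdges hS) (Set.Icc (a + 2 * S) (b + 2 * S)) f := by
  obtain ⟨hinj, hleaf, hsurj, hadj⟩ := h
  refine ⟨hinj, hleaf, hsurj, fun u v huv => ?_⟩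
  rw [hadj u v huv, T.dist_lengthenLeafEdges hS (hleaf u) (hleaf v) (hinj.ne huv)]
  simp only [Set.mem_Icc, add_le_add_iff_right]

/-- `f x` becomes an interior vertex and `x` moves to the new leaf `none`, at distance `0`
from it. -/
lemma addTwin [DecidableEq V] {I : Set ℝ} (h : IsPCGOn G T I f) (x : V) :
    IsPCGOn G (T.addPendant (f x) le_rfl) I (Function.update (some ∘ f) x none) := by
  obtain ⟨hinj, hleaf, hsurj, hadj⟩ := h
  set T' := T.addPendant (f x) le_rfl
  set g := Function.update (some ∘ f) x none
  have hgx : g x = none := Function.update_self ..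
  have hg : ∀ v, v ≠ x → g v = some (f v) := fun v hv => Function.update_of_ne hv ..
  obtain ⟨d, hd, -⟩ := hleaf x
  have hdist_left : ∀ v w, T'.dist (g v) (some w) = T.dist (f v) w := by
    intro v w
    by_cases hv : v = x
    · rw [hv, hgx, T.dist_addPendant_none_some, zero_add]
    · rw [hg v hv, T.dist_addPendant_some_some]
  have hdist : ∀ u v, T'.dist (g u) (g v) = T.dist (f u) (f v) := by
    intro u v
    by_cases hv : v = x
    · subst hv
      by_cases hu : u = v
      · rw [hu, T'.dist_self, T.dist_self]
      · rw [hg u hu, T'.dist_comm, hdist_left, T.dist_comm]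
    · rw [hg v hv, hdist_left]
  refine ⟨fun u v huv => ?_, fun v => ?_, ?_, fun u v huv => ?_⟩
  · by_cases hu : u = x <;> by_cases hv : v = x
    · exact hu.trans hv.symm
    · rw [hu, hgx, hg v hv] at huv; nomatch huv
    · rw [hv, hgx, hg u hu] at huv; nomatch huv
    · rw [hg u hu, hg v hv] at huv; exact hinj (Option.some_injective _ huv)
  · by_cases hv : v = x
    · rw [hv, hgx]; exact T.isLeaf_addPendant_none _ _
    · rw [hg v hv, T.isLeaf_addPendant_some_iff _ (hinj.ne hv)]; exact hleaf v
  · rintro (_ | w) hw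
    · exact ⟨x, hgx⟩
    · have hwx : w ≠ f x := by
        rintro rfl
        exact T.not_isLeaf_addPendant_some_self le_rfl hd hw
      obtain ⟨v, rfl⟩ := hsurj w ((T.isLeaf_addPendant_some_iff _ hwx).1 hw)
      exact ⟨v, hg v fun hv => hwx (congrArg f hv)⟩
  · rw [hadj u v huv, hdist]

lemma addPendant (h : IsPCGOn G T (Set.Icc a b) f) (ha : 0 ≤ a) (hab : a ≤ b) {x : V} {c : W}
    (hc : ¬ T.IsLeaf c) (hcx : T.g.Adj c (f x)) (hx : T.dist c (f x) = 0)
    (hfar : ∀ v, v ≠ x → b < a + T.dist c (f v)) :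
    IsPCGOn (G.addPendant x) (T.addPendant c ha) (Set.Icc a b) (Option.map f) := by
  obtain ⟨hinj, hleaf, hsurj, hadj⟩ := h
  have hfc : ∀ v, f v ≠ c := fun v hv => hc (hv ▸ hleaf v)
  have hnone : ∀ v, (G.addPendant x).Adj none (some v) ↔
      (T.addPendant c ha).dist none (some (f v)) ∈ Set.Icc a b := by
    intro v
    rw [addPendant_adj_none_some, T.dist_addPendant_none_some]
    by_cases hv : v = x
    · simp [hv, hx, hab]
    · simp only [hv, false_iff, Set.mem_Icc, not_and, not_le]
      exact fun _ => hfar v hv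
  refine ⟨Option.map_injective hinj, ?_, ?_, ?_⟩
  · rintro (_ | v)
    · exact T.isLeaf_addPendant_none c ha
    · exact (T.isLeaf_addPendant_some_iff ha (hfc v)).2 (hleaf v)
  · rintro (_ | w) hw
    · exact ⟨none, rfl⟩
    · have hwc : w ≠ c := by
        rintro rfl
        exact T.not_isLeaf_addPendant_some_self ha hcx hw
      obtain ⟨v, rfl⟩ := hsurj w ((T.isLeaf_addPendant_some_iff ha hwc).1 hw)
      exact ⟨some v, rfl⟩
  · rintro (_ | u) (_ | v) huv
    · exact absurd rfl huv
    · exact hnone v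
    · rw [adj_comm, WTree.dist_comm]
      exact hnone u
    · rw [Option.map_some, Option.map_some, addPendant_adj_some_some,
        T.dist_addPendant_some_some]
      exact hadj u v fun e => huv (congrArg some e)

lemma isPCG_addPendant [Fintype W] (h : IsPCGOn G T (Set.Icc a b) f) (ha : 0 ≤ a) (hab : a ≤ b)
    (x : V) (hfar : ∀ v, v ≠ x → b < a + T.dist (f x) (f v)) : IsPCG (G.addPendant x) := by
  classical
  obtain ⟨d, hd, -⟩ := h.2.1 x
  have hc := T.not_isLeaf_addPendant_some_self le_rfl hd
  refine ⟨_, inferInstance, _, a, b, _, ha, (h.addTwin x).addPendant ha hab hc ?_ ?_ fun v hv => ?_⟩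
  · rw [Function.update_self]
    exact addPendant_adj_some_none.2 rfl
  · rw [Function.update_self, WTree.dist_comm, T.dist_addPendant_none_some, WTree.dist_self,
      add_zero]
  · rw [Function.update_of_ne hv, Function.comp_apply, T.dist_addPendant_some_some]
    exact hfar v hv

end IsPCGOn

/-- If `G` is a PCG, then the graph obtained from `G` by adding a new vertex of degree 1,
adjacent exactly to the existing vertex `x`, is also a PCG. The new graph lives on `Option V`,
with `none` being the new pendant vertex. -/
theorem isPCG_addPendant {V : Type} (G : SimpleGraph V) (h : IsPCG G) (x : V) :
    IsPCG (SimpleGraph.fromRel (fun a b : Option V =>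
      (∃ u v : V, a = some u ∧ b = some v ∧ G.Adj u v) ∨ (a = none ∧ b = some x))) := by
  rw [fromRel_eq_addPendant]
  obtain ⟨W, _, T, a, b, f, ha, hf⟩ := h
  obtain ⟨a, b, ha, hab, hf⟩ := hf.exists_nonempty_Icc ha
  have hS : 0 ≤ b - a + 1 := by linarith
  refine (hf.lengthenLeafEdges hS).isPCG_addPendant (by positivity) (by linarith) x fun v hv => ?_
  rw [T.dist_lengthenLeafEdges hS (hf.2.1 x) (hf.2.1 v) (hf.1.ne hv.symm)]
  linarith [T.dist_nonneg (f x) (f v)]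
end

section
/- If G is a PCG, then both G and its complement are 2-interval-PCGs; i.e., the union of the PCG class and the class of complements of PCGs is contained in the 2-interval-PCG class. -/
open SimpleGraph

lemma WTree.walkWeight_nonneg_s8 {W : Type} (T : WTree W) {u v : W} (p : T.g.Walk u v) :
    0 ≤ T.walkWeight p := by
  induction p with
  | nil => simp [WTree.walkWeight]
  | cons h p ih =>
    have : T.walkWeight (SimpleGraph.Walk.cons h p) = T.wt _ _ + T.walkWeight p := rfl
    rw [this]
    exact add_nonneg (T.wt_nonneg _ _) ih

lemma WTree.dist_nonneg_s8 {W : Type} (T : WTree W) (u v : W) : 0 ≤ T.dist u v := by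
  unfold WTree.dist
  exact T.walkWeight_nonneg_s8 _

/-- `PCG ∪ co-PCG ⊆ 2-interval-PCG`: if `G` is a PCG or the complement of a PCG,
then `G` is a 2-interval-PCG. -/
theorem pcg_union_coPCG_subset_twoIntervalPCG {V : Type} [Fintype V] (G : SimpleGraph V)
    (h : IsPCG G ∨ IsPCG Gᶜ) : IsKIntervalPCG 2 G := by
  classical
  rcases h with h | h
  · obtain ⟨W, fW, T, a, b, f, ha, hinj, hleaf, hsurj, hadj⟩ := h
    refine ⟨W, fW, T, ![Set.Icc a b, Set.Icc 1 0], f, ?_, ?_, hinj, hleaf, hsurj, ?_⟩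
    · intro i
      fin_cases i
      · exact ⟨a, b, ha, rfl⟩
      · exact ⟨1, 0, zero_le_one, rfl⟩
    · intro i j hij
      fin_cases i <;> fin_cases j <;>
        simp_all [Function.onFun, Set.Icc_eq_empty (show ¬(1:ℝ) ≤ 0 by norm_num)]
    · intro u v huv
      rw [hadj u v huv]
      constructor
      · intro hd
        exact ⟨0, by simpa using hd⟩
      · rintro ⟨i, hi⟩
        fin_cases i
        · simpa using hi
        · simp only [Matrix.cons_val_one, Matrix.head_cons, Set.mem_Icc] at hi
          linarith [hi.1, hi.2]
  · obtain ⟨W, fW, T, a, b, f, ha, hinj, hleaf, hsurj, hadj⟩ := h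
    set D : Finset ℝ := Finset.image (fun p : V × V => T.dist (f p.1) (f p.2)) Finset.univ with hD
    set L : Finset ℝ := D.filter (fun d => d < a) with hL
    set H : Finset ℝ := D.filter (fun d => a ≤ d ∧ b < d) with hH
    set I1 : Set ℝ := if hne : L.Nonempty then Set.Icc 0 (L.max' hne) else Set.Icc 1 0 with hI1
    set I2 : Set ℝ := if hne : H.Nonempty then Set.Icc (H.min' hne) (H.max' hne) else Set.Icc 1 0
      with hI2
    have hLlt : ∀ d ∈ L, d < a := by
      intro d hd
      exact (Finset.mem_filter.mp hd).2
    have hHgt : ∀ d ∈ H, a ≤ d ∧ b < d := by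
      intro d hd
      exact (Finset.mem_filter.mp hd).2
    refine ⟨W, fW, T, ![I1, I2], f, ?_, ?_, hinj, hleaf, hsurj, ?_⟩
    · intro i
      fin_cases i
      · simp only [Matrix.cons_val_zero]
        rw [hI1]
        by_cases hne : L.Nonempty
        · rw [dif_pos hne]; exact ⟨0, L.max' hne, le_refl 0, rfl⟩
        · rw [dif_neg hne]; exact ⟨1, 0, zero_le_one, rfl⟩
      · simp only [Matrix.cons_val_one, Matrix.head_cons]
        rw [hI2]
        by_cases hne : H.Nonempty
        · rw [dif_pos hne]
          exact ⟨H.min' hne, H.max' hne, le_trans ha (hHgt _ (H.min'_mem hne)).1, rfl⟩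
        · rw [dif_neg hne]; exact ⟨1, 0, zero_le_one, rfl⟩
    · have hdisj : Disjoint I1 I2 := by
        rw [hI1, hI2]
        by_cases hne : L.Nonempty
        · by_cases hne' : H.Nonempty
          · rw [dif_pos hne, dif_pos hne']
            rw [Set.disjoint_left]
            intro x hx hx'
            have h1 : x ≤ L.max' hne := hx.2
            have h2 : H.min' hne' ≤ x := hx'.1
            have h3 : L.max' hne < a := hLlt _ (L.max'_mem hne)
            have h4 : a ≤ H.min' hne' := (hHgt _ (H.min'_mem hne')).1
            linarith
          · rw [dif_neg hne', Set.Icc_eq_empty (show ¬(1:ℝ) ≤ 0 by norm_num)]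
            exact disjoint_bot_right
        · rw [dif_neg hne, Set.Icc_eq_empty (show ¬(1:ℝ) ≤ 0 by norm_num)]
          exact disjoint_bot_left
      intro i j hij
      fin_cases i <;> fin_cases j
      · exact absurd rfl hij
      · simpa [Function.onFun] using hdisj
      · simpa [Function.onFun] using hdisj.symm
      · exact absurd rfl hij
    · intro u v huv
      set d : ℝ := T.dist (f u) (f v) with hd
      have hdD : d ∈ D := by
        rw [hD]
        exact Finset.mem_image.mpr ⟨(u, v), Finset.mem_univ _, rfl⟩
      have hd0 : 0 ≤ d := T.dist_nonneg_s8 _ _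
      have hcompl : Gᶜ.Adj u v ↔ d ∈ Set.Icc a b := hadj u v huv
      have hGadj : G.Adj u v ↔ d ∉ Set.Icc a b := by
        constructor
        · intro hg hmem
          exact ( (SimpleGraph.compl_adj G u v).mp (hcompl.mpr hmem)).2 hg
        · intro hg
          by_contra hng
          exact hg (hcompl.mp ((SimpleGraph.compl_adj G u v).mpr ⟨huv, hng⟩))
      rw [hGadj]
      constructor
      · intro hd'
        rw [Set.mem_Icc, not_and_or, not_le, not_le] at hd'
        by_cases hlt : d < a
        · have hmemL : d ∈ L := Finset.mem_filter.mpr ⟨hdD, hlt⟩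
          have hne : L.Nonempty := ⟨d, hmemL⟩
          refine ⟨0, ?_⟩
          simp only [Matrix.cons_val_zero]
          rw [hI1, dif_pos hne]
          exact Set.mem_Icc.mpr ⟨hd0, L.le_max' _ hmemL⟩
        · have hb : b < d := by
            rcases hd' with h' | h'
            · exact absurd h' (not_lt.mpr (not_lt.mp hlt))
            · exact h'
          have hmemH : d ∈ H := Finset.mem_filter.mpr ⟨hdD, not_lt.mp hlt, hb⟩
          have hne : H.Nonempty := ⟨d, hmemH⟩
          refine ⟨1, ?_⟩
          simp only [Matrix.cons_val_one, Matrix.head_cons]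
          rw [hI2, dif_pos hne]
          exact Set.mem_Icc.mpr ⟨H.min'_le _ hmemH, H.le_max' _ hmemH⟩
      · rintro ⟨i, hi⟩
        fin_cases i
        · simp only [Matrix.cons_val_zero] at hi
          rw [hI1] at hi
          by_cases hne : L.Nonempty
          · rw [dif_pos hne] at hi
            have : d < a := lt_of_le_of_lt hi.2 (hLlt _ (L.max'_mem hne))
            intro hmem
            exact absurd hmem.1 (not_le.mpr this)
          · rw [dif_neg hne] at hi
            have := hi.1
            have := hi.2
            linarith
        · simp only [Matrix.cons_val_one, Matrix.head_cons] at hi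
          rw [hI2] at hi
          by_cases hne : H.Nonempty
          · rw [dif_pos hne] at hi
            have : b < d := lt_of_lt_of_le (hHgt _ (H.min'_mem hne)).2 hi.1
            intro hmem
            exact absurd hmem.2 (not_le.mpr this)
          · rw [dif_neg hne] at hi
            have := hi.1
            have := hi.2
            linarith
end
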